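/- Key Lemma 2 (unilateral version): If (α_n, β_n)_{n≥0} is a Bailey pair relative to a, i.e., β_n = Σ_{j=0}^{n} α_j / ((q;q)_{n-j} (aq;q)_{n+j}) for all n ≥ 0, then (α'_n, β'_n) is a Bailey pair relative to a/q, where α'_0 = α_0, α'_n = (1-a)( q^n α_n/(1 - a q^{2n}) - q^{n-1} α_{n-1}/(1 - a q^{2n-2}) ) for n ≥ 1, and β'_n = q^n β_n. That is, β'_n = Σ_{j=0}^{n} α'_j / ((q;q)_{n-j} (a;q)_{n+j}) for all n ≥ 0. -/

import Mathlib

/-!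
Write `α'_j = (1 - a)(γ_j - γ_{j-1})` with `γ_j = q^j α_j / (1 - a q^{2j})` and `γ_{-1} = 0`.
Summation by parts turns `∑_j α'_j / ((q;q)_{n-j} (a;q)_{n+j})` into a sum of `γ_j` against
differences of consecutive weights (the last weight alone at `j = n`), and
`1/((q;q)_{i+1} (a;q)_N) - 1/((q;q)_i (a;q)_{N+1}) = (q^{i+1} - a q^N) / ((q;q)_{i+1} (a;q)_{N+1})`.
For `N = n + j`, `i + 1 = n - j` the numerator is `q^{n-j} (1 - a q^{2j})`, which cancels the
denominator of `γ_j`, while `(a;q)_{N+1} = (1 - a)(aq;q)_N` absorbs the factor `1 - a`; what is left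
is `q^n` times the `j`-th term of `β_n`.
-/

/-- The q-Pochhammer symbol `(x;q)_k = ∏_{i=0}^{k-1} (1 - x q^i)`. -/
noncomputable def qp (q x : ℂ) (k : ℕ) : ℂ := ∏ i ∈ Finset.range k, (1 - x * q ^ i)

open Finset

theorem Finset.sum_range_succ_mul_eq_of_sub {R : Type*} [CommRing R] (c γ w : ℕ → R)
    (h0 : c 0 = γ 0) (hsucc : ∀ j, c (j + 1) = γ (j + 1) - γ j) (n : ℕ) :
    ∑ j ∈ range (n + 1), c j * w j = ∑ j ∈ range n, γ j * (w j - w (j + 1)) + γ n * w n := by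
  induction n with
  | zero => simp [h0]
  | succ n ih =>
    rw [sum_range_succ, ih, sum_range_succ, hsucc]
    ring

lemma qp_zero (q x : ℂ) : qp q x 0 = 1 :=
  prod_range_zero _

lemma qp_one (q x : ℂ) : qp q x 1 = 1 - x := by
  simp [qp]

lemma qp_succ (q x : ℂ) (k : ℕ) : qp q x (k + 1) = qp q x k * (1 - x * q ^ k) :=
  prod_range_succ _ _

lemma qp_succ' (q x : ℂ) (k : ℕ) : qp q x (k + 1) = (1 - x) * qp q (x * q) k := by
  rw [qp, prod_range_succ', pow_zero, mul_one, mul_comm]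
  exact congrArg _ (prod_congr rfl fun i _ ↦ by ring)

section NeZero

variable {q x : ℂ} {k : ℕ}

lemma qp_ne_zero_of_succ (h : qp q x (k + 1) ≠ 0) : qp q x k ≠ 0 :=
  left_ne_zero_of_mul (qp_succ q x k ▸ h)

lemma one_sub_mul_pow_ne_zero_of_qp_succ (h : qp q x (k + 1) ≠ 0) : 1 - x * q ^ k ≠ 0 :=
  right_ne_zero_of_mul (qp_succ q x k ▸ h)

lemma qp_mul_ne_zero_of_qp_succ (h : qp q x (k + 1) ≠ 0) : qp q (x * q) k ≠ 0 :=
  right_ne_zero_of_mul (qp_succ' q x k ▸ h)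

end NeZero

lemma inv_qp_mul_qp_sub_inv_qp_mul_qp {q a : ℂ} {i N : ℕ} (hq : qp q q (i + 1) ≠ 0)
    (ha : qp q a (N + 1) ≠ 0) :
    (qp q q (i + 1) * qp q a N)⁻¹ - (qp q q i * qp q a (N + 1))⁻¹
      = (q ^ (i + 1) - a * q ^ N) / (qp q q (i + 1) * qp q a (N + 1)) := by
  have hqi := qp_ne_zero_of_succ hq
  have haN := qp_ne_zero_of_succ ha
  have hq' := one_sub_mul_pow_ne_zero_of_qp_succ hq
  have ha' := one_sub_mul_pow_ne_zero_of_qp_succ ha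
  rw [qp_succ q q i, qp_succ q a N]
  field_simp
  ring

section BaileyTerms

variable {q a : ℂ}

lemma bailey_term_of_lt (hqq : ∀ k, qp q q k ≠ 0) (ha : ∀ k, qp q a k ≠ 0) {j n : ℕ}
    (hjn : j < n) (x : ℂ) :
    (1 - a) * (q ^ j * x / (1 - a * q ^ (2 * j))) *
        ((qp q q (n - j) * qp q a (n + j))⁻¹ - (qp q q (n - (j + 1)) * qp q a (n + (j + 1)))⁻¹)
      = q ^ n * (x / (qp q q (n - j) * qp q (a * q) (n + j))) := by
  obtain ⟨i, rfl⟩ : ∃ i, n = j + i + 1 := ⟨n - j - 1, by omega⟩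
  rw [show j + i + 1 - j = i + 1 by omega, show j + i + 1 - (j + 1) = i by omega,
    show j + i + 1 + (j + 1) = j + i + 1 + j + 1 by omega,
    inv_qp_mul_qp_sub_inv_qp_mul_qp (hqq _) (ha _), qp_succ' q a]
  have h1a : 1 - a ≠ 0 := qp_one q a ▸ ha 1
  have h2j := one_sub_mul_pow_ne_zero_of_qp_succ (ha (2 * j + 1))
  have haq := qp_mul_ne_zero_of_qp_succ (ha (j + i + 1 + j + 1))
  have hq := hqq (i + 1)
  field_simp
  ring

lemma bailey_term_self (ha : ∀ k, qp q a k ≠ 0) (n : ℕ) (x : ℂ) :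
    (1 - a) * (q ^ n * x / (1 - a * q ^ (2 * n))) * (qp q q (n - n) * qp q a (n + n))⁻¹
      = q ^ n * (x / (qp q q (n - n) * qp q (a * q) (n + n))) := by
  have hshift : (1 - a) * qp q (a * q) (n + n) = qp q a (n + n) * (1 - a * q ^ (2 * n)) := by
    rw [← qp_succ', qp_succ, two_mul]
  have h2n := one_sub_mul_pow_ne_zero_of_qp_succ (ha (2 * n + 1))
  have haq := qp_mul_ne_zero_of_qp_succ (ha (n + n + 1))
  have han := ha (n + n)
  rw [Nat.sub_self, qp_zero, one_mul, one_mul]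
  field_simp
  linear_combination (q ^ n * x) * hshift

end BaileyTerms

theorem key_lemma_two_general (q a : ℂ) (α β α' β' : ℕ → ℂ)
    (hqq : ∀ k, qp q q k ≠ 0) (ha : ∀ k, qp q a k ≠ 0)
    (hB : ∀ n, β n = ∑ j ∈ Finset.range (n + 1),
        α j / (qp q q (n - j) * qp q (a * q) (n + j)))
    (hα'0 : α' 0 = α 0)
    (hα' : ∀ n : ℕ, α' (n + 1) = (1 - a) *
        (q ^ (n + 1) * α (n + 1) / (1 - a * q ^ (2 * (n + 1)))
          - q ^ n * α n / (1 - a * q ^ (2 * n))))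
    (hβ' : ∀ n, β' n = q ^ n * β n) :
    ∀ n, β' n = ∑ j ∈ Finset.range (n + 1),
        α' j / (qp q q (n - j) * qp q a (n + j)) := by
  intro n
  set γ : ℕ → ℂ := fun j ↦ (1 - a) * (q ^ j * α j / (1 - a * q ^ (2 * j)))
  have hγ0 : α' 0 = γ 0 := by
    have h1a : 1 - a ≠ 0 := qp_one q a ▸ ha 1
    simp only [γ, hα'0, pow_zero, mul_zero, mul_one, one_mul]
    field_simp
  have hγsucc : ∀ j, α' (j + 1) = γ (j + 1) - γ j := fun j ↦ by rw [hα', mul_sub]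
  simp_rw [div_eq_mul_inv (α' _)]
  rw [sum_range_succ_mul_eq_of_sub α' γ _ hγ0 hγsucc, hβ', hB, mul_sum, sum_range_succ,
    bailey_term_self ha]
  congr 1
  refine sum_congr rfl fun j hj ↦ ?_
  exact (bailey_term_of_lt hqq ha (mem_range.mp hj) (α j)).symm

/-- Key Lemma 2 (unilateral): if `(α, β)` is a Bailey pair relative to `a`, then
`(α', β')` with `α'_0 = α_0`, `α'_n = (1-a)(q^n α_n/(1-aq^{2n}) - q^{n-1} α_{n-1}/(1-aq^{2n-2}))`
and `β'_n = q^n β_n` is a Bailey pair relative to `a/q`. -/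
theorem key_lemma_two (q a : ℂ) (α β α' β' : ℕ → ℂ)
    (hqq : ∀ k, qp q q k ≠ 0) (ha : ∀ k, qp q a k ≠ 0) (haq : ∀ k, qp q (a * q) k ≠ 0)
    (hden : ∀ n : ℕ, 1 - a * q ^ (2 * n) ≠ 0)
    (hB : ∀ n, β n = ∑ j ∈ Finset.range (n + 1),
        α j / (qp q q (n - j) * qp q (a * q) (n + j)))
    (hα'0 : α' 0 = α 0)
    (hα' : ∀ n : ℕ, α' (n + 1) = (1 - a) *
        (q ^ (n + 1) * α (n + 1) / (1 - a * q ^ (2 * (n + 1)))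
          - q ^ n * α n / (1 - a * q ^ (2 * n))))
    (hβ' : ∀ n, β' n = q ^ n * β n) :
    ∀ n, β' n = ∑ j ∈ Finset.range (n + 1),
        α' j / (qp q q (n - j) * qp q a (n + j)) :=
  key_lemma_two_general q a α β α' β' hqq ha hB hα'0 hα' hβ'
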